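/- Let T be a rooted tree in which every vertex has at most Δ children (Δ ≥ 2), and define Q(T) = Σ_{v ∈ ℒ(T)} Σ_{w ∈ ℒ(T)} ℓ(v ∨ w), the sum of ancestral levels over all ordered pairs of leaves. Then Q(T) ≥ L(T)(L(T) − 1)/(Δ − 1). -/
import Mathlib


open Matrix

/-- A rooted tree on a finite vertex type `V`, encoded by its root and the
parent function: the root is its own parent, and iterating the parent function
from any vertex eventually reaches the root.  (These conditions force the graph
whose edges join each non-root vertex to its parent to be a tree.) -/
structure TreeOn (V : Type) [Fintype V] [DecidableEq V] where
  root : V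
  parent : V → V
  parent_root : parent root = root
  reaches : ∀ v, ∃ k, parent^[k] v = root

namespace TreeOn

variable {V : Type} [Fintype V] [DecidableEq V]

/-- `u` is a (weak) ancestor of `v`: some iterate of the parent function sends
`v` to `u`.  (Any ancestor is reached within `Fintype.card V` steps, so the
bound makes the predicate decidable without changing its meaning.) -/
def IsAncestor (T : TreeOn V) (u v : V) : Prop :=
  ∃ k, k ≤ Fintype.card V ∧ T.parent^[k] v = u

instance (T : TreeOn V) (u v : V) : Decidable (T.IsAncestor u v) := by
  have h : T.IsAncestor u v ↔ ∃ k ∈ Finset.range (Fintype.card V + 1), T.parent^[k] v = u := by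
    simp [IsAncestor, Nat.lt_succ_iff]
  rw [h]; infer_instance

/-- The level of a vertex: its distance to the root. -/
def level (T : TreeOn V) (v : V) : ℕ := Nat.find (T.reaches v)

/-- The ancestral level `ℓ(v ∨ w)`: the level of the lowest common ancestor
of `v` and `w`, i.e. the greatest level of a common ancestor. -/
def lcaLevel (T : TreeOn V) (v w : V) : ℕ :=
  (Finset.univ.filter fun u => T.IsAncestor u v ∧ T.IsAncestor u w).sup T.level

/-- A leaf is a vertex with no children. -/
def IsLeaf (T : TreeOn V) (v : V) : Prop := ∀ u, T.parent u = v → u = v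

instance (T : TreeOn V) : DecidablePred T.IsLeaf := fun v =>
  inferInstanceAs (Decidable (∀ u, T.parent u = v → u = v))

/-- The type of leaves of `T`. -/
abbrev Leaf (T : TreeOn V) := {v : V // T.IsLeaf v}

/-- The ancestral matrix `C(T)`, indexed by the leaves of `T`, whose
`(v, w)` entry is the ancestral level `ℓ(v ∨ w)`. -/
noncomputable def ancMatrix (T : TreeOn V) : Matrix T.Leaf T.Leaf ℝ :=
  Matrix.of fun v w => (T.lcaLevel v.1 w.1 : ℝ)

/-- The ancestral spectral radius `ρ_C(T)`: the largest eigenvalue of `C(T)`. -/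
noncomputable def rhoC (T : TreeOn V) : ℝ :=
  sSup {μ : ℝ | ∃ x : T.Leaf → ℝ, x ≠ 0 ∧ T.ancMatrix.mulVec x = μ • x}

/-- The underlying simple graph of the tree: each non-root vertex is joined
to its parent. -/
def graph (T : TreeOn V) : SimpleGraph V :=
  SimpleGraph.fromRel fun u v => T.parent u = v ∧ u ≠ v

/-- The number of children (outdegree) of a vertex. -/
def childCount (T : TreeOn V) (v : V) : ℕ :=
  (Finset.univ.filter fun u => T.parent u = v ∧ u ≠ v).card

end TreeOn

namespace TreeOn

variable {V : Type} [Fintype V] [DecidableEq V]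

/-- `Q(T) = Σ_{v ∈ ℒ(T)} Σ_{w ∈ ℒ(T)} ℓ(v ∨ w)`, the sum of the ancestral
levels over all ordered pairs of leaves. -/
def Qsum (T : TreeOn V) : ℕ :=
  ∑ v : T.Leaf, ∑ w : T.Leaf, T.lcaLevel v.1 w.1

end TreeOn

namespace TreeOn

variable {V : Type} [Fintype V] [DecidableEq V] (T : TreeOn V)

lemma aux_iterate_root (k : ℕ) : T.parent^[k] T.root = T.root :=
  Function.iterate_fixed T.parent_root k

lemma aux_level_spec (v : V) : T.parent^[T.level v] v = T.root :=
  Nat.find_spec (T.reaches v)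

lemma aux_level_le {v : V} {k : ℕ} (h : T.parent^[k] v = T.root) : T.level v ≤ k :=
  Nat.find_min' _ h

lemma aux_iterate_eq_root {v : V} {k : ℕ} (h : T.level v ≤ k) :
    T.parent^[k] v = T.root := by
  obtain ⟨m, rfl⟩ := Nat.exists_eq_add_of_le h
  rw [add_comm, Function.iterate_add_apply, T.aux_level_spec, T.aux_iterate_root]

lemma aux_level_iterate {v : V} {k : ℕ} (h : k ≤ T.level v) :
    T.level (T.parent^[k] v) = T.level v - k := by
  apply le_antisymm
  · apply T.aux_level_le
    rw [← Function.iterate_add_apply, Nat.sub_add_cancel h]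
    exact T.aux_level_spec v
  · have h2 : T.parent^[T.level (T.parent^[k] v) + k] v = T.root := by
      rw [Function.iterate_add_apply]; exact T.aux_level_spec _
    have := T.aux_level_le h2
    omega

lemma aux_level_lt_card (v : V) : T.level v < Fintype.card V := by
  have h : (Finset.range (T.level v + 1)).card ≤ (Finset.univ : Finset V).card := by
    apply Finset.card_le_card_of_injOn (fun k => T.parent^[k] v)
    · intro a _; exact Finset.mem_univ _
    · intro i hi j hj hij
      simp only [Finset.coe_range, Set.mem_Iio, Nat.lt_succ_iff] at hi hj
      have h1 := T.aux_level_iterate (v := v) (k := i) hi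
      have h2 := T.aux_level_iterate (v := v) (k := j) hj
      have hij' : T.parent^[i] v = T.parent^[j] v := hij
      rw [hij', h2] at h1
      omega
  simpa using h

lemma aux_isAncestor_of_iterate {u v : V} {k : ℕ} (h : T.parent^[k] v = u) :
    T.IsAncestor u v := by
  rcases le_or_gt k (T.level v) with hk | hk
  · exact ⟨k, by have := T.aux_level_lt_card v; omega, h⟩
  · refine ⟨T.level v, by have := T.aux_level_lt_card v; omega, ?_⟩
    rw [T.aux_level_spec, ← T.aux_iterate_eq_root hk.le, h]

lemma aux_isAncestor_iff {u v : V} :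
    T.IsAncestor u v ↔ ∃ k, k ≤ T.level v ∧ T.parent^[k] v = u := by
  constructor
  · rintro ⟨k, -, h⟩
    rcases le_or_gt k (T.level v) with hk | hk
    · exact ⟨k, hk, h⟩
    · refine ⟨T.level v, le_rfl, ?_⟩
      rw [T.aux_level_spec, ← T.aux_iterate_eq_root hk.le, h]
  · rintro ⟨k, _, h⟩
    exact T.aux_isAncestor_of_iterate h

lemma aux_isAncestor_self (v : V) : T.IsAncestor v v :=
  T.aux_isAncestor_of_iterate (k := 0) rfl

lemma aux_isAncestor_root (v : V) : T.IsAncestor T.root v :=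
  T.aux_isAncestor_of_iterate (T.aux_level_spec v)

lemma aux_level_le_of_isAncestor {u v : V} (h : T.IsAncestor u v) :
    T.level u ≤ T.level v := by
  rw [aux_isAncestor_iff] at h
  obtain ⟨k, hk, h⟩ := h
  have := T.aux_level_iterate hk
  rw [h] at this
  omega

lemma aux_iterate_of_isAncestor {u v : V} (h : T.IsAncestor u v) :
    T.parent^[T.level v - T.level u] v = u := by
  rw [aux_isAncestor_iff] at h
  obtain ⟨k, hk, h⟩ := h
  have h2 := T.aux_level_iterate hk
  rw [h] at h2
  have : T.level v - T.level u = k := by omega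
  rw [this, h]

lemma aux_isAncestor_unique {u u' v : V} (h : T.IsAncestor u v) (h' : T.IsAncestor u' v)
    (hl : T.level u = T.level u') : u = u' := by
  have e1 := T.aux_iterate_of_isAncestor h
  have e2 := T.aux_iterate_of_isAncestor h'
  rw [← hl] at e2
  rw [← e1, ← e2]

lemma aux_isAncestor_trans {u' u v : V} (h1 : T.IsAncestor u' u) (h2 : T.IsAncestor u v) :
    T.IsAncestor u' v := by
  obtain ⟨j, -, hj⟩ := h1
  obtain ⟨k, -, hk⟩ := h2
  exact T.aux_isAncestor_of_iterate (k := j + k)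
    (by rw [Function.iterate_add_apply, hk, hj])

lemma aux_isAncestor_antisymm {u v : V} (h1 : T.IsAncestor u v) (h2 : T.IsAncestor v u) :
    u = v :=
  T.aux_isAncestor_unique h1 (T.aux_isAncestor_self v)
    (le_antisymm (T.aux_level_le_of_isAncestor h1) (T.aux_level_le_of_isAncestor h2))

/-- The finset of common ancestors of `v` and `w`. -/
def commonAnc (v w : V) : Finset V :=
  Finset.univ.filter fun u => T.IsAncestor u v ∧ T.IsAncestor u w

lemma aux_root_mem_commonAnc (v w : V) : T.root ∈ T.commonAnc v w := by
  simp [commonAnc, T.aux_isAncestor_root]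

lemma aux_card_commonAnc (v w : V) :
    (T.commonAnc v w).card = T.lcaLevel v w + 1 := by
  obtain ⟨u0, hu0, hu0l⟩ := Finset.exists_mem_eq_sup (T.commonAnc v w)
    ⟨_, T.aux_root_mem_commonAnc v w⟩ T.level
  have hlca : T.lcaLevel v w = T.level u0 := hu0l
  rw [← Finset.card_range (T.lcaLevel v w + 1)]
  apply Finset.card_bij (fun u _ => T.level u)
  · intro a ha
    simp only [Finset.mem_range, Nat.lt_succ_iff]
    exact Finset.le_sup ha
  · intro a1 h1 a2 h2 h
    simp only [commonAnc, Finset.mem_filter] at h1 h2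
    exact T.aux_isAncestor_unique h1.2.1 h2.2.1 h
  · intro j hj
    simp only [Finset.mem_range, Nat.lt_succ_iff] at hj
    simp only [commonAnc, Finset.mem_filter, Finset.mem_univ, true_and] at hu0
    have hjl : j ≤ T.level u0 := by omega
    refine ⟨T.parent^[T.level u0 - j] u0, ?_, ?_⟩
    · simp only [commonAnc, Finset.mem_filter, Finset.mem_univ, true_and]
      have hanc : T.IsAncestor (T.parent^[T.level u0 - j] u0) u0 :=
        T.aux_isAncestor_of_iterate rfl
      exact ⟨T.aux_isAncestor_trans hanc hu0.1, T.aux_isAncestor_trans hanc hu0.2⟩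
    · rw [T.aux_level_iterate (by omega)]
      omega

lemma aux_lcaLevel_eq_card (v w : V) :
    T.lcaLevel v w = ((T.commonAnc v w).erase T.root).card := by
  rw [Finset.card_erase_of_mem (T.aux_root_mem_commonAnc v w), T.aux_card_commonAnc]
  omega

/-- Number of leaves weakly below `u`. -/
def leafCount (u : V) : ℕ :=
  (Finset.univ.filter fun x : T.Leaf => T.IsAncestor u x.1).card

lemma aux_Qsum_eq :
    T.Qsum = ∑ u ∈ Finset.univ.erase T.root, T.leafCount u * T.leafCount u := by
  unfold Qsum
  have step : ∀ v w : T.Leaf, T.lcaLevel v.1 w.1 =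
      ∑ u ∈ Finset.univ.erase T.root,
        (if T.IsAncestor u v.1 then 1 else 0) * (if T.IsAncestor u w.1 then 1 else 0) := by
    intro v w
    rw [T.aux_lcaLevel_eq_card]
    rw [commonAnc, ← Finset.filter_erase, Finset.card_filter]
    apply Finset.sum_congr rfl
    intro u _
    by_cases h1 : T.IsAncestor u v.1 <;> by_cases h2 : T.IsAncestor u w.1 <;> simp [h1, h2]
  simp only [step]
  have e1 : ∀ v : T.Leaf,
      (∑ w : T.Leaf, ∑ u ∈ Finset.univ.erase T.root,
        (if T.IsAncestor u v.1 then 1 else 0) * (if T.IsAncestor u w.1 then 1 else 0))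
      = ∑ u ∈ Finset.univ.erase T.root, ∑ w : T.Leaf,
        (if T.IsAncestor u v.1 then 1 else 0) * (if T.IsAncestor u w.1 then 1 else 0) :=
    fun v => Finset.sum_comm
  simp only [e1]
  rw [Finset.sum_comm]
  apply Finset.sum_congr rfl
  intro u _
  rw [← Finset.sum_mul_sum]
  congr 1 <;>
  · unfold leafCount
    rw [Finset.card_filter]

/-- The finset of (weak) descendants of `u`. -/
def desc (u : V) : Finset V := Finset.univ.filter fun x => T.IsAncestor u x

lemma aux_mem_desc {u x : V} : x ∈ T.desc u ↔ T.IsAncestor u x := by simp [desc]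

lemma aux_self_mem_desc (u : V) : u ∈ T.desc u := T.aux_mem_desc.2 (T.aux_isAncestor_self u)

lemma aux_eq_of_iterate_eq_leaf {u : V} (hu : T.IsLeaf u) :
    ∀ k x, T.parent^[k] x = u → x = u := by
  intro k
  induction k with
  | zero => intro x h; exact h
  | succ n ih =>
    intro x h
    rw [Function.iterate_succ_apply] at h
    exact hu x (ih _ h)

lemma aux_eq_of_isAncestor_leaf {u x : V} (hu : T.IsLeaf u) (h : T.IsAncestor u x) : x = u := by
  obtain ⟨k, -, hk⟩ := h
  exact T.aux_eq_of_iterate_eq_leaf hu k x hk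

lemma aux_desc_of_leaf {u : V} (hu : T.IsLeaf u) : T.desc u = {u} := by
  ext x
  simp only [aux_mem_desc, Finset.mem_singleton]
  exact ⟨fun h => T.aux_eq_of_isAncestor_leaf hu h, fun h => h ▸ T.aux_isAncestor_self u⟩

lemma aux_leafCount_of_leaf {u : V} (hu : T.IsLeaf u) : T.leafCount u = 1 := by
  unfold leafCount
  rw [Finset.card_eq_one]
  refine ⟨⟨u, hu⟩, ?_⟩
  ext x
  simp only [Finset.mem_filter, Finset.mem_univ, true_and, Finset.mem_singleton]
  constructor
  · intro h; exact Subtype.ext (T.aux_eq_of_isAncestor_leaf hu h)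
  · rintro rfl; exact T.aux_isAncestor_self u

/-- The finset of children of `u`. -/
def childSet (u : V) : Finset V := Finset.univ.filter fun c => T.parent c = u ∧ c ≠ u

lemma aux_card_childSet (u : V) : (T.childSet u).card = T.childCount u := rfl

lemma aux_level_child {c u : V} (hc : T.parent c = u) (hne : c ≠ u) :
    T.level c = T.level u + 1 := by
  have h0 : 1 ≤ T.level c := by
    rcases Nat.eq_zero_or_pos (T.level c) with h | h
    · exfalso
      have hs := T.aux_level_spec c
      rw [h, Function.iterate_zero_apply] at hs
      subst hs
      rw [T.parent_root] at hc
      exact hne hc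
    · exact h
  have := T.aux_level_iterate (v := c) (k := 1) h0
  rw [Function.iterate_one, hc] at this
  omega

lemma aux_isAncestor_of_child {c u : V} (hc : c ∈ T.childSet u) : T.IsAncestor u c := by
  simp only [childSet, Finset.mem_filter, Finset.mem_univ, true_and] at hc
  exact T.aux_isAncestor_of_iterate (k := 1) (by simpa using hc.1)

lemma aux_exists_child {u x : V} (h : T.IsAncestor u x) (hne : x ≠ u) :
    ∃ c ∈ T.childSet u, T.IsAncestor c x := by
  have hex : ∃ k, T.parent^[k] x = u := ⟨_, T.aux_iterate_of_isAncestor h⟩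
  have hk : T.parent^[Nat.find hex] x = u := Nat.find_spec hex
  have hk0 : Nat.find hex ≠ 0 := by
    intro h0
    rw [h0, Function.iterate_zero_apply] at hk
    exact hne hk
  refine ⟨T.parent^[Nat.find hex - 1] x, ?_, T.aux_isAncestor_of_iterate rfl⟩
  simp only [childSet, Finset.mem_filter, Finset.mem_univ, true_and]
  constructor
  · have h5 := Function.iterate_succ_apply' T.parent (Nat.find hex - 1) x
    rw [show (Nat.find hex - 1).succ = Nat.find hex by omega] at h5
    rw [← h5]
    exact hk
  · intro hcu
    exact Nat.find_min hex (m := Nat.find hex - 1) (by omega) hcu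

lemma aux_child_unique {u c c' x : V} (hc : c ∈ T.childSet u) (hc' : c' ∈ T.childSet u)
    (h : T.IsAncestor c x) (h' : T.IsAncestor c' x) : c = c' := by
  have hc2 := hc; have hc2' := hc'
  simp only [childSet, Finset.mem_filter, Finset.mem_univ, true_and] at hc2 hc2'
  exact T.aux_isAncestor_unique h h'
    (by rw [T.aux_level_child hc2.1 hc2.2, T.aux_level_child hc2'.1 hc2'.2])

lemma aux_desc_erase_eq (u : V) :
    (T.desc u).erase u = (T.childSet u).biUnion T.desc := by
  ext x
  simp only [Finset.mem_erase, aux_mem_desc, Finset.mem_biUnion]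
  constructor
  · rintro ⟨hne, h⟩
    obtain ⟨c, hc, hcx⟩ := T.aux_exists_child h hne
    exact ⟨c, hc, hcx⟩
  · rintro ⟨c, hc, hx⟩
    have huc : T.IsAncestor u c := T.aux_isAncestor_of_child hc
    refine ⟨?_, T.aux_isAncestor_trans huc hx⟩
    rintro rfl
    have hc2 := hc
    simp only [childSet, Finset.mem_filter, Finset.mem_univ, true_and] at hc2
    exact hc2.2 (T.aux_isAncestor_antisymm hx huc)

lemma aux_desc_pairwiseDisjoint (u : V) :
    (↑(T.childSet u) : Set V).PairwiseDisjoint T.desc := by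
  intro c hc c' hc' hne
  apply Finset.disjoint_left.2
  intro x hx hx'
  exact hne (T.aux_child_unique (Finset.mem_coe.1 hc) (Finset.mem_coe.1 hc')
    (T.aux_mem_desc.1 hx) (T.aux_mem_desc.1 hx'))

lemma aux_leafCount_eq_sum {u : V} (hu : ¬ T.IsLeaf u) :
    T.leafCount u = ∑ c ∈ T.childSet u, T.leafCount c := by
  unfold leafCount
  rw [← Finset.card_biUnion]
  · congr 1
    ext x
    simp only [Finset.mem_filter, Finset.mem_univ, true_and, Finset.mem_biUnion]
    constructor
    · intro h
      have hne : x.1 ≠ u := by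
        intro h'
        exact hu (h' ▸ x.2)
      obtain ⟨c, hc, hcx⟩ := T.aux_exists_child h hne
      exact ⟨c, hc, hcx⟩
    · rintro ⟨c, hc, hx⟩
      exact T.aux_isAncestor_trans (T.aux_isAncestor_of_child hc) hx
  · intro c hc c' hc' hne
    apply Finset.disjoint_left.2
    intro x hx hx'
    simp only [Finset.mem_filter, Finset.mem_univ, true_and] at hx hx'
    exact hne (T.aux_child_unique hc hc' hx hx')

lemma aux_key (Δ : ℕ) (hΔ : 2 ≤ Δ) (hdeg : ∀ v, T.childCount v ≤ Δ) :
    ∀ n : ℕ, ∀ u : V, (T.desc u).card ≤ n →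
      (T.leafCount u : ℝ) * ((T.leafCount u : ℝ) - 1)
        ≤ ((Δ : ℝ) - 1) * ∑ x ∈ (T.desc u).erase u, (T.leafCount x : ℝ) ^ 2 := by
  intro n
  induction n with
  | zero =>
    intro u hu
    exfalso
    have h := T.aux_self_mem_desc u
    rw [Nat.le_zero, Finset.card_eq_zero] at hu
    rw [hu] at h
    exact Finset.notMem_empty u h
  | succ n ih =>
    intro u hcard
    by_cases hu : T.IsLeaf u
    · rw [T.aux_leafCount_of_leaf hu, T.aux_desc_of_leaf hu, Finset.erase_singleton]
      simp
    · have hCne : (T.childSet u).Nonempty := by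
        unfold IsLeaf at hu
        push_neg at hu
        obtain ⟨c, hc1, hc2⟩ := hu
        exact ⟨c, by simp [childSet, hc1, hc2]⟩
      have hcardC : ((T.childSet u).card : ℝ) ≤ (Δ : ℝ) := by
        have := hdeg u
        rw [← T.aux_card_childSet u] at this
        exact_mod_cast this
      have hih : ∀ c ∈ T.childSet u, (T.leafCount c : ℝ) * ((T.leafCount c : ℝ) - 1)
          ≤ ((Δ : ℝ) - 1) * ∑ x ∈ (T.desc c).erase c, (T.leafCount x : ℝ) ^ 2 := by
        intro c hc
        apply ih
        have hsub : T.desc c ⊆ (T.desc u).erase u := by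
          rw [T.aux_desc_erase_eq]
          exact Finset.subset_biUnion_of_mem T.desc hc
        have h1 : (T.desc c).card ≤ ((T.desc u).erase u).card := Finset.card_le_card hsub
        have h2 : ((T.desc u).erase u).card = (T.desc u).card - 1 :=
          Finset.card_erase_of_mem (T.aux_self_mem_desc u)
        have h3 : 1 ≤ (T.desc u).card := Finset.card_pos.2 ⟨u, T.aux_self_mem_desc u⟩
        omega
      have hsum : ∑ x ∈ (T.desc u).erase u, (T.leafCount x : ℝ) ^ 2
          = ∑ c ∈ T.childSet u, ((T.leafCount c : ℝ) ^ 2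
              + ∑ x ∈ (T.desc c).erase c, (T.leafCount x : ℝ) ^ 2) := by
        rw [T.aux_desc_erase_eq, Finset.sum_biUnion (T.aux_desc_pairwiseDisjoint u)]
        apply Finset.sum_congr rfl
        intro c _
        rw [← Finset.add_sum_erase _ _ (T.aux_self_mem_desc c)]
      have hLf : (T.leafCount u : ℝ) = ∑ c ∈ T.childSet u, (T.leafCount c : ℝ) := by
        rw [T.aux_leafCount_eq_sum hu]
        push_cast
        rfl
      have hCS : (∑ c ∈ T.childSet u, (T.leafCount c : ℝ)) ^ 2
          ≤ (Δ : ℝ) * ∑ c ∈ T.childSet u, (T.leafCount c : ℝ) ^ 2 := by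
        calc (∑ c ∈ T.childSet u, (T.leafCount c : ℝ)) ^ 2
            ≤ ((T.childSet u).card : ℝ) * ∑ c ∈ T.childSet u, (T.leafCount c : ℝ) ^ 2 :=
              sq_sum_le_card_mul_sum_sq
          _ ≤ (Δ : ℝ) * ∑ c ∈ T.childSet u, (T.leafCount c : ℝ) ^ 2 :=
              mul_le_mul_of_nonneg_right hcardC
                (Finset.sum_nonneg fun i _ => sq_nonneg _)
      have h1 : ∑ c ∈ T.childSet u, ((Δ : ℝ) * (T.leafCount c : ℝ) ^ 2 - (T.leafCount c : ℝ))
          ≤ ∑ c ∈ T.childSet u, ((Δ : ℝ) - 1) * ((T.leafCount c : ℝ) ^ 2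
              + ∑ x ∈ (T.desc c).erase c, (T.leafCount x : ℝ) ^ 2) := by
        apply Finset.sum_le_sum
        intro c hc
        nlinarith [hih c hc]
      have h2 : ∑ c ∈ T.childSet u, ((Δ : ℝ) * (T.leafCount c : ℝ) ^ 2 - (T.leafCount c : ℝ))
          = (Δ : ℝ) * (∑ c ∈ T.childSet u, (T.leafCount c : ℝ) ^ 2)
            - ∑ c ∈ T.childSet u, (T.leafCount c : ℝ) := by
        rw [Finset.sum_sub_distrib, Finset.mul_sum]
      rw [hsum, Finset.mul_sum, hLf]
      calc (∑ c ∈ T.childSet u, (T.leafCount c : ℝ))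
            * ((∑ c ∈ T.childSet u, (T.leafCount c : ℝ)) - 1)
          = (∑ c ∈ T.childSet u, (T.leafCount c : ℝ)) ^ 2
            - ∑ c ∈ T.childSet u, (T.leafCount c : ℝ) := by ring
        _ ≤ (Δ : ℝ) * (∑ c ∈ T.childSet u, (T.leafCount c : ℝ) ^ 2)
            - ∑ c ∈ T.childSet u, (T.leafCount c : ℝ) := by linarith
        _ = ∑ c ∈ T.childSet u, ((Δ : ℝ) * (T.leafCount c : ℝ) ^ 2 - (T.leafCount c : ℝ)) :=
            h2.symm
        _ ≤ _ := h1

end TreeOn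

/-- If every vertex of `T` has at most `Δ ≥ 2` children, then
`Q(T) ≥ L(T)(L(T) − 1)/(Δ − 1)`. -/
theorem Qsum_ge
    {V : Type} [Fintype V] [DecidableEq V] (T : TreeOn V) (Δ : ℕ)
    (hΔ : 2 ≤ Δ) (hdeg : ∀ v, T.childCount v ≤ Δ) :
    (Fintype.card T.Leaf : ℝ) * ((Fintype.card T.Leaf : ℝ) - 1) / ((Δ : ℝ) - 1)
      ≤ (T.Qsum : ℝ) := by
  have hpos : (0 : ℝ) < (Δ : ℝ) - 1 := by
    have h2 : (2 : ℝ) ≤ (Δ : ℝ) := by exact_mod_cast hΔ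
    linarith
  have hroot : T.desc T.root = Finset.univ := by
    ext x
    simp [TreeOn.aux_mem_desc, T.aux_isAncestor_root]
  have hL : T.leafCount T.root = Fintype.card T.Leaf := by
    unfold TreeOn.leafCount
    rw [Finset.filter_true_of_mem (fun (x : T.Leaf) (_ : x ∈ Finset.univ) => T.aux_isAncestor_root x.1)]
    exact Finset.card_univ
  have hkey := T.aux_key Δ hΔ hdeg (T.desc T.root).card T.root le_rfl
  rw [hroot, hL] at hkey
  have hQ : (T.Qsum : ℝ) = ∑ x ∈ Finset.univ.erase T.root, (T.leafCount x : ℝ) ^ 2 := by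
    rw [T.aux_Qsum_eq]
    push_cast
    apply Finset.sum_congr rfl
    intro x _
    ring
  rw [div_le_iff₀ hpos, hQ]
  calc (Fintype.card T.Leaf : ℝ) * ((Fintype.card T.Leaf : ℝ) - 1)
      ≤ ((Δ : ℝ) - 1) * ∑ x ∈ Finset.univ.erase T.root, (T.leafCount x : ℝ) ^ 2 := hkey
    _ = (∑ x ∈ Finset.univ.erase T.root, (T.leafCount x : ℝ) ^ 2) * ((Δ : ℝ) - 1) := by ring
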